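/- The Cartesian complex Tanimoto kernel K_{ψC}(Z,W) = J_Tan(ψ_C(Z), ψ_C(W)) is positive semidefinite on ℂⁿ: for any finite collection Z₁,…,Z_m ∈ ℂⁿ and any real coefficients c₁,…,c_m, Σᵢ Σⱼ cᵢ cⱼ K_{ψC}(Zᵢ, Zⱼ) ≥ 0. -/

import Mathlib

open Finset

/-- Cartesian sign-split embedding `ψ_C : ℂⁿ → ℝ₊^{4n}`, indexed by `Fin n × Fin 4`. -/
noncomputable def psiC {n : ℕ} (Z : Fin n → ℂ) : Fin n × Fin 4 → ℝ :=
  fun p =>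
    if p.2 = 0 then max (Z p.1).re 0
    else if p.2 = 1 then max (-(Z p.1).re) 0
    else if p.2 = 2 then max (Z p.1).im 0
    else max (-(Z p.1).im) 0

/-- Tanimoto similarity on nonnegative vectors. -/
noncomputable def JTan {ι : Type*} [Fintype ι] (u v : ι → ℝ) : ℝ :=
  if 0 < ∑ j, max (u j) (v j) then (∑ j, min (u j) (v j)) / (∑ j, max (u j) (v j)) else 1

/-- Cartesian complex Tanimoto kernel `K_{ψC}(Z,W) = J_Tan(ψ_C(Z), ψ_C(W))`. -/
noncomputable def KpsiC {n : ℕ} (Z W : Fin n → ℂ) : ℝ := JTan (psiC Z) (psiC W)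

/-!
For nonnegative `u, v` put `s = ∑ min (u p) (v p)`, `a = ∑ u`, `b = ∑ v`; then
`∑ max (u p) (v p) = a + b - s`, so with `r = s / (a + b) ∈ [0, 1/2]` the Tanimoto similarity is
`s / (a + b - s) = r / (1 - r) = ∑_{k ≥ 1} r ^ k` (plus `1` when `u = v = 0`). The kernel `s` is a
sum of min-kernels, `(a + b)⁻¹ = ∫_{t ≤ 0} exp (a t) exp (b t) dt` is a Gram kernel, so `r` is
positive semidefinite by the Schur product theorem, and so are its Hadamard powers and their
convergent sum.
-/

open MeasureTheory Set

namespace Matrix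

variable {κ : Type*}

theorem PosSemidef.of_hasSum {X : Type*} {f : X → Matrix κ κ ℝ} {A : Matrix κ κ ℝ}
    (hf : ∀ k, (f k).PosSemidef) (h : HasSum f A) : A.PosSemidef := by
  refine ⟨?_, fun x => ?_⟩
  · have hH : HasSum f Aᴴ := by
      simpa only [fun k => (hf k).isHermitian.eq] using h.matrix_conjTranspose
    exact hH.unique h
  · have hentry : ∀ i j, HasSum (fun k => f k i j) (A i j) := fun i j =>
      Pi.hasSum.mp (Pi.hasSum.mp h i) j
    exact (hasSum_sum fun i _ => hasSum_sum fun j _ =>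
      ((hentry i j).mul_left _).mul_right _).nonneg fun k => (hf k).2 x

theorem PosSemidef.sum_mul_mul_nonneg [Fintype κ] {A : Matrix κ κ ℝ} (hA : A.PosSemidef)
    (c : κ → ℝ) : 0 ≤ ∑ i, ∑ j, c i * c j * A i j := by
  simpa [dotProduct, mulVec, Finset.mul_sum, mul_comm, mul_left_comm, mul_assoc] using
    hA.dotProduct_mulVec_nonneg c

variable [Finite κ]

theorem PosSemidef.map_pow {A : Matrix κ κ ℝ} (hA : A.PosSemidef) (k : ℕ) :
    (A.map (· ^ k)).PosSemidef := by
  induction k with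
  | zero =>
    convert posSemidef_vecMulVec_self_star (fun _ : κ => (1 : ℝ)) using 1
    ext i j
    simp [vecMulVec]
  | succ k ih =>
    rw [show A.map (· ^ (k + 1)) = A.map (· ^ k) ⊙ A by ext; simp [pow_succ]]
    exact ih.hadamard hA

theorem PosSemidef.map_div_one_sub {A : Matrix κ κ ℝ} (hA : A.PosSemidef)
    (h : ∀ i j, |A i j| < 1) : (A.map fun r => r / (1 - r)).PosSemidef := by
  refine PosSemidef.of_hasSum (fun k => hA.map_pow (k + 1))
    (Pi.hasSum.mpr fun i => Pi.hasSum.mpr fun j => ?_)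
  simpa [pow_succ, div_eq_mul_inv, mul_comm] using
    (hasSum_geometric_of_abs_lt_one (h i j)).mul_left (A i j)

theorem posSemidef_min {x : κ → ℝ} (hx : ∀ i, 0 ≤ x i) :
    (of fun i j => min (x i) (x j)).PosSemidef := by
  convert posSemidef_matrix_measure_inter (μ := volume) (s := fun i => Ioc 0 (x i))
    (fun _ => measurableSet_Ioc) (fun _ => measure_Ioc_lt_top.ne) using 1
  ext i j
  simp [Set.Ioc_inter_Ioc, hx i, hx j]

theorem posSemidef_integral_mul {α : Type*} [MeasurableSpace α] {μ : Measure α}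
    {g : κ → α → ℝ} (hg : ∀ i, MemLp (g i) 2 μ) :
    (of fun i j => ∫ t, g i t * g j t ∂μ).PosSemidef := by
  suffices h : of (fun i j => ∫ t, g i t * g j t ∂μ) = gram ℝ (fun i => (hg i).toLp) by
    rw [h]
    exact posSemidef_gram ℝ _
  ext i j
  rw [gram_apply, L2.inner_def, of_apply]
  refine integral_congr_ae ?_
  filter_upwards [(hg i).coeFn_toLp, (hg j).coeFn_toLp] with t hi hj
  simp [hi, hj, mul_comm]

theorem posSemidef_inv_add {a : κ → ℝ} (ha : ∀ i, 0 < a i) :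
    (of fun i j => (a i + a j)⁻¹).PosSemidef := by
  have hexp : ∀ i, MemLp (fun t => Real.exp (a i * t)) 2 (volume.restrict (Iic 0)) := by
    intro i
    refine (memLp_two_iff_integrable_sq (by fun_prop)).mpr ?_
    simpa [IntegrableOn, sq, ← Real.exp_add, ← two_mul, mul_assoc] using
      integrableOn_exp_mul_Iic (mul_pos two_pos (ha i)) 0
  convert posSemidef_integral_mul hexp using 1
  ext i j
  simp [← Real.exp_add, ← add_mul, integral_exp_mul_Iic (add_pos (ha i) (ha j))]

end Matrix

section Tanimoto

open Matrix

variable {ι : Type*} [Fintype ι]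

noncomputable def minSumRatio (u v : ι → ℝ) : ℝ :=
  (∑ p, min (u p) (v p)) / (∑ p, u p + ∑ p, v p)

theorem sum_max_eq_sum_add_sum_sub_sum_min (u v : ι → ℝ) :
    ∑ p, max (u p) (v p) = ∑ p, u p + ∑ p, v p - ∑ p, min (u p) (v p) := by
  rw [← sum_add_distrib, ← sum_sub_distrib]
  exact sum_congr rfl fun p _ => by linarith [min_add_max (u p) (v p)]

theorem sum_min_nonneg {u v : ι → ℝ} (hu : ∀ p, 0 ≤ u p) (hv : ∀ p, 0 ≤ v p) :
    0 ≤ ∑ p, min (u p) (v p) :=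
  sum_nonneg fun p _ => le_min (hu p) (hv p)

theorem sum_min_le_sum_left (u v : ι → ℝ) : ∑ p, min (u p) (v p) ≤ ∑ p, u p :=
  sum_le_sum fun _ _ => min_le_left _ _

theorem sum_min_le_sum_right (u v : ι → ℝ) : ∑ p, min (u p) (v p) ≤ ∑ p, v p :=
  sum_le_sum fun _ _ => min_le_right _ _

theorem JTan_eq_of_nonneg {u v : ι → ℝ} (hu : ∀ p, 0 ≤ u p) (hv : ∀ p, 0 ≤ v p) :
    JTan u v = (if ∑ p, u p = 0 then 1 else 0) * (if ∑ p, v p = 0 then 1 else 0) +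
      minSumRatio u v / (1 - minSumRatio u v) := by
  have hs0 := sum_min_nonneg hu hv
  have hsu := sum_min_le_sum_left u v
  have hsv := sum_min_le_sum_right u v
  rw [JTan, sum_max_eq_sum_add_sum_sub_sum_min, minSumRatio]
  set a := ∑ p, u p
  set b := ∑ p, v p
  set s := ∑ p, min (u p) (v p)
  clear_value a b s
  by_cases hpos : 0 < a + b - s
  · have hz : (if a = 0 then (1 : ℝ) else 0) * (if b = 0 then 1 else 0) = 0 := by
      split_ifs <;> linarith
    have hab : a + b ≠ 0 := by linarith
    rw [if_pos hpos, hz, zero_add, one_sub_div hab, div_div_div_cancel_right₀ hab]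
  · obtain ⟨rfl, rfl, rfl⟩ : a = 0 ∧ b = 0 ∧ s = 0 := by
      refine ⟨?_, ?_, ?_⟩ <;> linarith
    simp

theorem abs_minSumRatio_lt_one {u v : ι → ℝ} (hu : ∀ p, 0 ≤ u p) (hv : ∀ p, 0 ≤ v p) :
    |minSumRatio u v| < 1 := by
  have hs0 := sum_min_nonneg hu hv
  have hsu := sum_min_le_sum_left u v
  have hsv := sum_min_le_sum_right u v
  rw [minSumRatio, abs_of_nonneg (div_nonneg hs0 (by linarith))]
  rcases (show 0 ≤ ∑ p, u p + ∑ p, v p by linarith).eq_or_lt with h | h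
  · simp [← h]
  · rw [div_lt_one h]
    linarith

variable {κ : Type*} [Finite κ]

theorem posSemidef_minSumRatio (u : κ → ι → ℝ) (hu : ∀ i p, 0 ≤ u i p) :
    (of fun i j => minSumRatio (u i) (u j)).PosSemidef := by
  have hsum : ∀ i, 0 ≤ ∑ p, u i p := fun i => sum_nonneg fun p _ => hu i p
  have hmin : ∀ i j, ∑ p, u i p = 0 → ∑ p, min (u i p) (u j p) = 0 := fun i j h =>
    le_antisymm (h ▸ sum_min_le_sum_left _ _) (sum_min_nonneg (hu i) (hu j))
  have hS : (of fun i j => ∑ p, min (u i p) (u j p)).PosSemidef := by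
    convert posSemidef_sum univ fun p _ => posSemidef_min fun i => hu i p
    ext i j
    simp [Matrix.sum_apply]
  -- `(a i + a j)⁻¹` is a Cauchy kernel only for `a > 0`; where `a i = 0` the factor `s i j`
  -- vanishes, so `a i` may be replaced there by `1`.
  set A : κ → ℝ := fun i => if ∑ p, u i p = 0 then 1 else ∑ p, u i p
  have hA : ∀ i, 0 < A i := fun i => by
    by_cases h : ∑ p, u i p = 0
    · simp [A, h]
    · simpa [A, h] using (hsum i).lt_of_ne' h
  suffices h : of (fun i j => minSumRatio (u i) (u j)) =
      of (fun i j => ∑ p, min (u i p) (u j p)) ⊙ of fun i j => (A i + A j)⁻¹ by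
    rw [h]
    exact hS.hadamard (posSemidef_inv_add hA)
  ext i j
  simp only [hadamard_apply, of_apply, minSumRatio]
  by_cases hi : ∑ p, u i p = 0
  · simp [hmin i j hi]
  by_cases hj : ∑ p, u j p = 0
  · simp [min_comm (u i _), hmin j i hj]
  simp [A, hi, hj, div_eq_mul_inv]

theorem posSemidef_JTan (u : κ → ι → ℝ) (hu : ∀ i p, 0 ≤ u i p) :
    (of fun i j => JTan (u i) (u j)).PosSemidef := by
  have hJ : of (fun i j => JTan (u i) (u j)) =
      vecMulVec (fun i => if ∑ p, u i p = 0 then 1 else 0)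
        (star fun i => if ∑ p, u i p = 0 then 1 else 0) +
      (of fun i j => minSumRatio (u i) (u j)).map fun r => r / (1 - r) := by
    ext i j
    simp [JTan_eq_of_nonneg (hu i) (hu j), vecMulVec]
  rw [hJ]
  exact (posSemidef_vecMulVec_self_star _).add
    ((posSemidef_minSumRatio u hu).map_div_one_sub fun i j =>
      abs_minSumRatio_lt_one (hu i) (hu j))

end Tanimoto

theorem psiC_nonneg {n : ℕ} (Z : Fin n → ℂ) (p : Fin n × Fin 4) : 0 ≤ psiC Z p := by
  unfold psiC
  split_ifs <;> exact le_max_right _ _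

/-- The Cartesian complex Tanimoto kernel is positive semidefinite on `ℂⁿ`:
for any `Z₁,…,Z_m ∈ ℂⁿ` and real coefficients `c₁,…,c_m`,
`Σᵢ Σⱼ cᵢ cⱼ K_{ψC}(Zᵢ,Zⱼ) ≥ 0`. -/
theorem KpsiC_psd {n m : ℕ} (Z : Fin m → Fin n → ℂ) (c : Fin m → ℝ) :
    0 ≤ ∑ i : Fin m, ∑ j : Fin m, c i * c j * KpsiC (Z i) (Z j) :=
  (posSemidef_JTan (fun i => psiC (Z i)) fun i => psiC_nonneg (Z i)).sum_mul_mul_nonneg c
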